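/- Let Y be a profinite set and L ⊆ Y*. Suppose there exist clopen subsets V₁, …, Vₙ of Y such that for every w ∈ L there exists f : {1,…,|w|} → {1,…,n} with w ∈ V_{f(1)} ⋯ V_{f(|w|)} ⊆ L. Then there exists a continuous surjection q : Y → A onto a finite discrete set such that L = (q*)⁻¹(q*[L]). -/

import Mathlib

/-!
Take for `q` the map recording which of the `Vᵢ` contain a point (made surjective onto its
finite image). It is continuous because the `Vᵢ` are clopen, and two words with the same image
under `q*` lie in exactly the same products `V_{f(1)} ⋯ V_{f(|w|)}`, so `L` is saturated.
-/

open Function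

theorem Continuous.exists_surjective_fin_factor {X β : Type*} [TopologicalSpace X]
    [TopologicalSpace β] [DiscreteTopology β] {g : X → β} (hg : Continuous g)
    [Finite (Set.range g)] :
    ∃ (m : ℕ) (q : X → Fin m), Continuous q ∧ Surjective q ∧
      ∀ x y, q x = q y → g x = g y := by
  have := Fintype.ofFinite (Set.range g)
  let e := Fintype.equivFin (Set.range g)
  refine ⟨_, e ∘ Set.rangeFactorization g, continuous_of_discreteTopology.comp
    (hg.subtype_mk _), e.surjective.comp Set.rangeFactorization_surjective,
    fun x y h => congrArg Subtype.val (e.injective h)⟩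

theorem mem_of_map_eq_map {α β ι : Type*} {L : Set (List α)} {V : ι → Set α} {q : α → β}
    (hq : ∀ x y, q x = q y → ∀ i, x ∈ V i → y ∈ V i)
    (hL : ∀ w ∈ L, ∃ f : Fin w.length → ι,
      (∀ j : Fin w.length, w.get j ∈ V (f j)) ∧
      ∀ (u : List α) (hu : u.length = w.length),
        (∀ j : Fin w.length, u.get (Fin.cast hu.symm j) ∈ V (f j)) → u ∈ L)
    {u w : List α} (hw : w ∈ L) (huw : u.map q = w.map q) : u ∈ L := by
  obtain ⟨f, hwV, hLV⟩ := hL w hw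
  have hlen : u.length = w.length := by simpa using congrArg List.length huw
  refine hLV u hlen fun j => hq _ _ ?_ _ (hwV j)
  have h := List.getElem_of_eq huw (i := j) (by simp [hlen])
  simp only [List.getElem_map] at h
  exact h.symm

theorem clopen_sets_implies_saturated_general {Y : Type*} [TopologicalSpace Y]
    (L : Set (List Y)) (n : ℕ) (V : Fin n → Set Y)
    (hV : ∀ i, IsClopen (V i))
    (hL : ∀ w ∈ L, ∃ f : Fin w.length → Fin n,
      (∀ j : Fin w.length, w.get j ∈ V (f j)) ∧
      ∀ (u : List Y) (hu : u.length = w.length),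
        (∀ j : Fin w.length, u.get (Fin.cast hu.symm j) ∈ V (f j)) → u ∈ L) :
    ∃ (n' : ℕ) (q : Y → Fin n'), Continuous q ∧ Function.Surjective q ∧
      L = (List.map q) ⁻¹' (List.map q '' L) := by
  have hg : Continuous fun y i => (V i).boolIndicator y :=
    continuous_pi fun i => (continuous_boolIndicator_iff_isClopen _).2 (hV i)
  obtain ⟨m, q, hqc, hqs, hqg⟩ := hg.exists_surjective_fin_factor
  have hqV : ∀ x y, q x = q y → ∀ i, x ∈ V i → y ∈ V i := fun x y hxy i hx => by
    rwa [Set.mem_iff_boolIndicator, ← congrFun (hqg x y hxy) i, ← Set.mem_iff_boolIndicator]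
  refine ⟨m, q, hqc, hqs, (Set.subset_preimage_image _ L).antisymm ?_⟩
  rintro u ⟨w, hw, hwu⟩
  exact mem_of_map_eq_map hqV hL hw hwu.symm

/-- If `L ⊆ Y*` admits clopen sets `V₁, …, Vₙ` such that every `w ∈ L` lies in
some product `V_{f(1)} ⋯ V_{f(|w|)} ⊆ L`, then `L = (q*)⁻¹(q*[L])` for some
continuous surjection `q` from `Y` onto a finite discrete set. -/
theorem clopen_sets_implies_saturated {Y : Type*} [TopologicalSpace Y]
    [CompactSpace Y] [T2Space Y] [TotallyDisconnectedSpace Y]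
    (L : Set (List Y)) (n : ℕ) (V : Fin n → Set Y)
    (hV : ∀ i, IsClopen (V i))
    (hL : ∀ w ∈ L, ∃ f : Fin w.length → Fin n,
      (∀ j : Fin w.length, w.get j ∈ V (f j)) ∧
      ∀ (u : List Y) (hu : u.length = w.length),
        (∀ j : Fin w.length, u.get (Fin.cast hu.symm j) ∈ V (f j)) → u ∈ L) :
    ∃ (n' : ℕ) (q : Y → Fin n'), Continuous q ∧ Function.Surjective q ∧
      L = (List.map q) ⁻¹' (List.map q '' L) :=
  clopen_sets_implies_saturated_general L n V hV hL
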